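/- Let α > 0 and L ≥ 0, and let γ > (L/(2α))². Define φ(t) = t·exp(γ t²). Then for all s ∈ ℝ, φ'(s) − (L/α)·|φ(s)| ≥ 1/2. -/

import Mathlib

/-!
Since `φ'(s) = (1 + 2γs²) e^{γs²}` and `|φ(s)| = |s| e^{γs²}`, the quantity equals
`(1 + 2γs² - c|s|) e^{γs²}` with `c = L/α`. The hypothesis on `γ` says `c² < 4γ`, so the
quadratic `2γx² - cx + 1/2` has negative discriminant and the first factor is at least `1/2`,
while the exponential factor is at least `1`.
-/

open Real

theorem hasDerivAt_mul_exp_mul_sq (γ s : ℝ) :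
    HasDerivAt (fun t => t * exp (γ * t ^ 2)) ((1 + 2 * γ * s ^ 2) * exp (γ * s ^ 2)) s := by
  have hquad : HasDerivAt (fun t => γ * t ^ 2) (γ * (2 * s)) s := by
    simpa using (hasDerivAt_pow 2 s).const_mul γ
  have hexp : HasDerivAt (fun t => exp (γ * t ^ 2)) (exp (γ * s ^ 2) * (γ * (2 * s))) s :=
    (hasDerivAt_exp _).comp s hquad
  exact ((hasDerivAt_id' s).mul hexp).congr_deriv (by ring)

theorem half_lt_one_add_two_mul_sq_sub_mul {γ c : ℝ} (h : c ^ 2 < 4 * γ) (x : ℝ) :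
    1 / 2 < 1 + 2 * γ * x ^ 2 - c * x := by
  have hγ : 0 < γ := by nlinarith [sq_nonneg c]
  have hscaled : 0 < 8 * γ * (1 / 2 + 2 * γ * x ^ 2 - c * x) := by
    have : 8 * γ * (1 / 2 + 2 * γ * x ^ 2 - c * x) = (4 * γ * x - c) ^ 2 + (4 * γ - c ^ 2) := by
      ring
    rw [this]
    nlinarith [sq_nonneg (4 * γ * x - c)]
  linarith [pos_of_mul_pos_right hscaled (by positivity)]

theorem phi_derivative_lower_bound_general (α L γ : ℝ)
    (hγ : γ > (L / (2 * α)) ^ 2) (φ : ℝ → ℝ)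
    (hφ : ∀ t : ℝ, φ t = t * Real.exp (γ * t ^ 2)) :
    ∀ s : ℝ, deriv φ s - (L / α) * |φ s| ≥ 1 / 2 := by
  intro s
  have hdisc : (L / α) ^ 2 < 4 * γ := by
    have : (L / α) ^ 2 = 4 * (L / (2 * α)) ^ 2 := by ring
    linarith
  have hφ' : φ = fun t => t * exp (γ * t ^ 2) := funext hφ
  have habs : |φ s| = |s| * exp (γ * s ^ 2) := by
    rw [hφ, abs_mul, abs_of_pos (exp_pos _)]
  rw [hφ', (hasDerivAt_mul_exp_mul_sq γ s).deriv, ← hφ', habs]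
  have hfactor : 1 / 2 < 1 + 2 * γ * s ^ 2 - L / α * |s| := by
    simpa only [sq_abs] using half_lt_one_add_two_mul_sq_sub_mul hdisc |s|
  have hγ₀ : 0 ≤ γ := (sq_nonneg _).trans hγ.le
  have hexp : 1 ≤ exp (γ * s ^ 2) := one_le_exp (by positivity)
  calc (1 + 2 * γ * s ^ 2) * exp (γ * s ^ 2) - L / α * (|s| * exp (γ * s ^ 2))
      = (1 + 2 * γ * s ^ 2 - L / α * |s|) * exp (γ * s ^ 2) := by ring
    _ ≥ 1 / 2 * 1 := mul_le_mul hfactor.le hexp zero_le_one (by linarith)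
    _ = 1 / 2 := by ring

theorem phi_derivative_lower_bound (α L γ : ℝ) (hα : 0 < α) (hL : 0 ≤ L)
    (hγ : γ > (L / (2 * α)) ^ 2) (φ : ℝ → ℝ)
    (hφ : ∀ t : ℝ, φ t = t * Real.exp (γ * t ^ 2)) :
    ∀ s : ℝ, deriv φ s - (L / α) * |φ s| ≥ 1 / 2 :=
  phi_derivative_lower_bound_general α L γ hγ φ hφ
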